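/- arXiv:q-alg/9712035 — 4 statements merged into one kernel-verified Lean document; each statement's English description precedes it below -/
import Mathlib

section
/- Let t be a parameter, n ≥ 1, and x, y₁, …, yₙ nonzero variables with all relevant denominators nonzero. Define φ_i = (∏_{1≤μ<i}(1 - y_μ⁻¹/x)) / (∏_{1≤μ≤i}(1 - t·y_μ⁻¹/x)) for 1 ≤ i ≤ n, and φ_{n+i} = [(∏_{n-i+1<μ≤n}(1 - y_μ/x)) / (∏_{n-i+1≤μ≤n}(1 - t·y_μ/x))] · ∏_{1≤μ≤n}[(1 - y_μ⁻¹/x)/(1 - t·y_μ⁻¹/x)] for 1 ≤ i ≤ n. Then t^{2n}·∏_{j=1}^{n}[(1 - y_j/x)(1 - y_j⁻¹/x)] / [(1 - t·y_j/x)(1 - t·y_j⁻¹/x)] = 1 + (t - 1)·∑_{i=1}^{2n} t^{i-1}·φ_i. -/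
open Finset

lemma prod_Icc_eq_bot' {M : Type*} [CommMonoid M] (f : ℕ → M) {a b : ℕ} (h : a ≤ b) :
    ∏ i ∈ Finset.Icc a b, f i = f a * ∏ i ∈ Finset.Icc (a+1) b, f i := by
  have h2 : Finset.Icc a b = insert a (Finset.Icc (a+1) b) := by
    ext i; simp only [Finset.mem_Icc, Finset.mem_insert]; omega
  rw [h2, Finset.prod_insert (by simp)]

lemma key_alg' {K : Type*} [Field K] (t C D : K) (hD : D ≠ 0) (hl : t * C - D = t - 1) :
    t * (C / D) = 1 + (t - 1) / D := by
  field_simp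
  linear_combination hl

/-- Identity (5.3): partial-fraction decomposition expressing the total symbol
function in terms of the cohomology basis `φ_{w_i}`.  Variables `y μ` are
indexed by `μ ∈ {1, …, n}`; the function `φ_{k+1}` appears as the summand at
index `k` in the sum over `Finset.range (2*n)`. -/
theorem stmt_6 {K : Type*} [Field K] (t x : K) (n : ℕ) (hn : 1 ≤ n)
    (y : ℕ → K) (hx : x ≠ 0) (hy : ∀ μ ∈ Icc 1 n, y μ ≠ 0)
    (hden : ∀ μ ∈ Icc 1 n,
      (1 - t * (y μ)⁻¹ / x ≠ 0) ∧ (1 - t * y μ / x ≠ 0)) :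
    t ^ (2 * n) *
      ∏ j ∈ Icc 1 n,
        ((1 - y j / x) * (1 - (y j)⁻¹ / x)) /
          ((1 - t * y j / x) * (1 - t * (y j)⁻¹ / x)) =
    1 + (t - 1) *
      ∑ k ∈ range (2 * n), t ^ k *
        (if k < n then
          (∏ μ ∈ Icc 1 k, (1 - (y μ)⁻¹ / x)) /
            (∏ μ ∈ Icc 1 (k + 1), (1 - t * (y μ)⁻¹ / x))
        else
          ((∏ μ ∈ Icc (2 * n - k + 1) n, (1 - y μ / x)) /
             (∏ μ ∈ Icc (2 * n - k) n, (1 - t * y μ / x))) *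
          ∏ μ ∈ Icc 1 n, (1 - (y μ)⁻¹ / x) / (1 - t * (y μ)⁻¹ / x)) := by
  have key : ∀ m, m ≤ 2 * n →
      (if m ≤ n then
        t ^ m * ∏ μ ∈ Icc 1 m, (1 - (y μ)⁻¹ / x) / (1 - t * (y μ)⁻¹ / x)
      else
        t ^ m * (∏ μ ∈ Icc (2 * n - m + 1) n, (1 - y μ / x) / (1 - t * y μ / x)) *
          ∏ μ ∈ Icc 1 n, (1 - (y μ)⁻¹ / x) / (1 - t * (y μ)⁻¹ / x))
      = 1 + (t - 1) *
        ∑ k ∈ range m, t ^ k *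
          (if k < n then
            (∏ μ ∈ Icc 1 k, (1 - (y μ)⁻¹ / x)) /
              (∏ μ ∈ Icc 1 (k + 1), (1 - t * (y μ)⁻¹ / x))
          else
            ((∏ μ ∈ Icc (2 * n - k + 1) n, (1 - y μ / x)) /
               (∏ μ ∈ Icc (2 * n - k) n, (1 - t * y μ / x))) *
            ∏ μ ∈ Icc 1 n, (1 - (y μ)⁻¹ / x) / (1 - t * (y μ)⁻¹ / x)) := by
    intro m
    induction m with
    | zero => intro _; simp
    | succ m ih =>
      intro hm2
      have hm : m ≤ 2 * n := by omega
      specialize ih hm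
      rw [Finset.sum_range_succ]
      by_cases h : m + 1 ≤ n
      · -- first regime
        have hmn : m ≤ n := by omega
        have hmem : m + 1 ∈ Icc 1 n := by simp [Finset.mem_Icc]; omega
        have hD : 1 - t * (y (m+1))⁻¹ / x ≠ 0 := (hden _ hmem).1
        rw [if_pos h, if_pos hmn] at *
        rw [if_pos (show m < n by omega)]
        rw [Finset.prod_Icc_succ_top (Nat.le_add_left 1 m)]
        rw [Finset.prod_Icc_succ_top (Nat.le_add_left 1 m)
           (f := fun μ => 1 - t * (y μ)⁻¹ / x)]
        rw [mul_add, ← add_assoc, ← ih]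
        rw [← div_div, ← Finset.prod_div_distrib]
        set Q := ∏ μ ∈ Icc 1 m, (1 - (y μ)⁻¹ / x) / (1 - t * (y μ)⁻¹ / x) with hQ
        have hl : t * (1 - (y (m+1))⁻¹ / x) - (1 - t * (y (m+1))⁻¹ / x) = t - 1 := by
          ring
        have := key_alg' t (1 - (y (m+1))⁻¹ / x) (1 - t * (y (m+1))⁻¹ / x) hD hl
        calc t ^ (m+1) * (Q * ((1 - (y (m+1))⁻¹ / x) / (1 - t * (y (m+1))⁻¹ / x)))
            = t ^ m * Q * (t * ((1 - (y (m+1))⁻¹ / x) / (1 - t * (y (m+1))⁻¹ / x))) := by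
              ring
          _ = t ^ m * Q * (1 + (t - 1) / (1 - t * (y (m+1))⁻¹ / x)) := by rw [this]
          _ = t ^ m * Q + (t - 1) * (t ^ m * (Q / (1 - t * (y (m+1))⁻¹ / x))) := by
              ring
      · -- second regime
        have hn2 : n ≤ m := by omega
        have hIH2 : t ^ m * (∏ μ ∈ Icc (2 * n - m + 1) n, (1 - y μ / x) / (1 - t * y μ / x)) *
            (∏ μ ∈ Icc 1 n, (1 - (y μ)⁻¹ / x) / (1 - t * (y μ)⁻¹ / x))
            = 1 + (t - 1) *
              ∑ k ∈ range m, t ^ k *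
                (if k < n then
                  (∏ μ ∈ Icc 1 k, (1 - (y μ)⁻¹ / x)) /
                    (∏ μ ∈ Icc 1 (k + 1), (1 - t * (y μ)⁻¹ / x))
                else
                  ((∏ μ ∈ Icc (2 * n - k + 1) n, (1 - y μ / x)) /
                     (∏ μ ∈ Icc (2 * n - k) n, (1 - t * y μ / x))) *
                  ∏ μ ∈ Icc 1 n, (1 - (y μ)⁻¹ / x) / (1 - t * (y μ)⁻¹ / x)) := by
          rcases eq_or_lt_of_le hn2 with heq | hlt
          · rw [if_pos (le_of_eq heq.symm)] at ih
            rw [← ih, ← heq]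
            have he : Finset.Icc (2 * n - n + 1) n = ∅ := by
              apply Finset.Icc_eq_empty; omega
            rw [he, Finset.prod_empty, mul_one]
          · rw [if_neg (by omega)] at ih
            exact ih
        rw [if_neg h, if_neg (show ¬ m < n by omega), mul_add, ← add_assoc, ← hIH2]
        have ha1 : (1:ℕ) ≤ 2 * n - m := by omega
        have ha2 : 2 * n - m ≤ n := by omega
        have e1 : 2 * n - (m + 1) + 1 = 2 * n - m := by omega
        rw [e1]
        set a := 2 * n - m with hadef
        have hamem : a ∈ Icc 1 n := by simp [Finset.mem_Icc]; omega
        have hD : 1 - t * y a / x ≠ 0 := (hden _ hamem).2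
        rw [prod_Icc_eq_bot' (fun μ => (1 - y μ / x) / (1 - t * y μ / x)) ha2]
        rw [prod_Icc_eq_bot' (fun μ => 1 - t * y μ / x) ha2]
        rw [mul_comm (1 - t * y a / x), ← div_div, ← Finset.prod_div_distrib]
        set Q := ∏ μ ∈ Icc (a+1) n, (1 - y μ / x) / (1 - t * y μ / x) with hQ
        set P := ∏ μ ∈ Icc 1 n, (1 - (y μ)⁻¹ / x) / (1 - t * (y μ)⁻¹ / x) with hP
        have hl : t * (1 - y a / x) - (1 - t * y a / x) = t - 1 := by ring
        have hk := key_alg' t (1 - y a / x) (1 - t * y a / x) hD hl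
        calc t ^ (m+1) * ((1 - y a / x) / (1 - t * y a / x) * Q) * P
            = t ^ m * Q * P * (t * ((1 - y a / x) / (1 - t * y a / x))) := by ring
          _ = t ^ m * Q * P * (1 + (t - 1) / (1 - t * y a / x)) := by rw [hk]
          _ = t ^ m * Q * P + (t - 1) * (t ^ m * (Q / (1 - t * y a / x) * P)) := by
              ring
  have h2n := key (2 * n) le_rfl
  rw [if_neg (by omega)] at h2n
  have e : 2 * n - 2 * n + 1 = 1 := by omega
  rw [e] at h2n
  rw [← h2n, mul_assoc, ← Finset.prod_mul_distrib]
  congr 1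
  apply Finset.prod_congr rfl
  intro j _
  exact (div_mul_div_comm _ _ _ _).symm
end

section
/- For q, t with 0 < q < 1, 0 < t < 1, n ≥ 1, and a positive integer λ, the polynomial P(y) = [(q;q)_λ/(t;q)_λ] · ∑_{i₁+⋯+i_{2n}=λ, i_k ≥ 0} [∏_{k=1}^{2n}(t;q)_{i_k}/(q;q)_{i_k}] · y₁^{i₁-i_{2n}} y₂^{i₂-i_{2n-1}} ⋯ yₙ^{iₙ-i_{n+1}} is invariant under each inversion y_j ↦ y_j⁻¹ and under each permutation of y₁, …, yₙ; that is, P is invariant under the Weyl group W(Cₙ) = (ℤ/2)ⁿ ⋊ Sₙ acting on the Laurent polynomial ring ℂ[y₁^{±1},…,yₙ^{±1}]. -/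
open Finset

/-- The explicit formula for the `Cₙ` Macdonald polynomial
`P_{(λ,0,…,0)}(y|q,t)` from Theorem 5.3 of the paper, as a function of
`y : Fin n → ℂ`.  The exponent of `y_j` (with `j` `0`-indexed) is
`i_j - i_{2n-1-j}`. -/
noncomputable def macdonaldCnRow (q t : ℂ) (n lam : ℕ) (y : Fin n → ℂ) : ℂ :=
  ((∏ k ∈ range lam, (1 - q ^ (k + 1))) / (∏ k ∈ range lam, (1 - t * q ^ k))) *
    ∑ i ∈ Finset.Nat.antidiagonalTuple (2 * n) lam,
      (∏ k : Fin (2 * n),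
          ((∏ m ∈ range (i k), (1 - t * q ^ m)) /
            (∏ m ∈ range (i k), (1 - q ^ (m + 1))))) *
        ∏ j : Fin n,
          (y j) ^ (((i (Fin.castLE (by omega) j) : ℤ)) -
                    ((i ((Fin.castLE (by omega) j).rev) : ℤ)))

namespace MacAux

/-- Embedding of `Fin n` into the first half of `Fin (2*n)`. -/
def eH (n : ℕ) (j : Fin n) : Fin (2 * n) := Fin.castLE (by omega) j

noncomputable def coeff (q t : ℂ) (n : ℕ) (i : Fin (2 * n) → ℕ) : ℂ :=
  ∏ k : Fin (2 * n),
    ((∏ m ∈ range (i k), (1 - t * q ^ m)) / (∏ m ∈ range (i k), (1 - q ^ (m + 1))))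

noncomputable def mono (n : ℕ) (y : Fin n → ℂ) (i : Fin (2 * n) → ℕ) : ℂ :=
  ∏ j : Fin n, (y j) ^ ((i (eH n j) : ℤ) - (i ((eH n j).rev) : ℤ))

lemma mac_eq (q t : ℂ) (n lam : ℕ) (y : Fin n → ℂ) :
    macdonaldCnRow q t n lam y =
      ((∏ k ∈ range lam, (1 - q ^ (k + 1))) / (∏ k ∈ range lam, (1 - t * q ^ k))) *
        ∑ i ∈ Finset.Nat.antidiagonalTuple (2 * n) lam,
          coeff q t n i * mono n y i := rfl

lemma sum_comp_perm {n lam : ℕ} (g : Equiv.Perm (Fin (2 * n)))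
    (F : (Fin (2 * n) → ℕ) → ℂ) :
    ∑ i ∈ Finset.Nat.antidiagonalTuple (2 * n) lam, F i =
      ∑ i ∈ Finset.Nat.antidiagonalTuple (2 * n) lam, F (i ∘ g) := by
  refine Finset.sum_nbij' (fun i => i ∘ g.symm) (fun i => i ∘ g) ?_ ?_ ?_ ?_ ?_
  · intro a ha
    rw [Finset.Nat.mem_antidiagonalTuple] at *
    rw [← ha]
    exact Equiv.sum_comp g.symm a
  · intro a ha
    rw [Finset.Nat.mem_antidiagonalTuple] at *
    rw [← ha]
    exact Equiv.sum_comp g a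
  · intro a _; funext k; simp
  · intro a _; funext k; simp
  · intro a _; congr 1; funext k; simp

lemma coeff_comp (q t : ℂ) {n : ℕ} (g : Equiv.Perm (Fin (2 * n)))
    (i : Fin (2 * n) → ℕ) : coeff q t n (i ∘ g) = coeff q t n i :=
  Equiv.prod_comp g (fun k =>
    ((∏ m ∈ range (i k), (1 - t * q ^ m)) / (∏ m ∈ range (i k), (1 - q ^ (m + 1)))))

lemma val_eH {n : ℕ} (j : Fin n) : ((eH n j : Fin (2 * n)) : ℕ) = j := rfl

lemma val_eH_rev {n : ℕ} (j : Fin n) : (((eH n j).rev : Fin (2 * n)) : ℕ) = 2 * n - (j + 1) := by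
  rw [Fin.val_rev, val_eH]

lemma eH_inj {n : ℕ} : Function.Injective (eH n) := fun j j' h => by
  have := congrArg Fin.val h
  rw [val_eH, val_eH] at this
  exact Fin.ext this

lemma eH_ne_rev {n : ℕ} (j j' : Fin n) : eH n j ≠ (eH n j').rev := by
  intro h
  have := congrArg Fin.val h
  rw [val_eH, val_eH_rev] at this
  have hj := j.isLt
  have hj' := j'.isLt
  omega

lemma rev_eH_inj {n : ℕ} : Function.Injective (fun j : Fin n => (eH n j).rev) :=
  fun j j' h => eH_inj (Fin.rev_injective h)

end MacAux

open MacAux in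
/-- `P_{(λ,0,…,0)}` is invariant under each inversion `y_j ↦ y_j⁻¹` and under
each permutation of `y₁, …, yₙ`, i.e. under the Weyl group `W(Cₙ)`. -/
theorem stmt_10 (q t : ℝ) (hq0 : 0 < q) (hq1 : q < 1) (ht0 : 0 < t)
    (ht1 : t < 1) (n lam : ℕ) (hn : 1 ≤ n) (hlam : 1 ≤ lam)
    (y : Fin n → ℂ) (hy : ∀ j, y j ≠ 0) :
    (∀ j₀ : Fin n,
        macdonaldCnRow (q : ℂ) (t : ℂ) n lam (Function.update y j₀ (y j₀)⁻¹) =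
          macdonaldCnRow (q : ℂ) (t : ℂ) n lam y) ∧
    (∀ σ : Equiv.Perm (Fin n),
        macdonaldCnRow (q : ℂ) (t : ℂ) n lam (y ∘ σ) =
          macdonaldCnRow (q : ℂ) (t : ℂ) n lam y) := by
  constructor
  · -- inversion invariance
    intro j₀
    set a : Fin (2 * n) := eH n j₀ with ha
    set g : Equiv.Perm (Fin (2 * n)) := Equiv.swap a a.rev with hg
    rw [mac_eq, mac_eq, sum_comp_perm g]
    congr 1
    apply Finset.sum_congr rfl
    intro i _
    rw [coeff_comp]
    congr 1
    unfold mono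
    apply Finset.prod_congr rfl
    intro j _
    simp only [Function.comp_apply]
    by_cases hj : j = j₀
    · subst hj
      rw [Function.update_self]
      have h1 : g (eH n j) = (eH n j).rev := Equiv.swap_apply_left _ _
      have h2 : g ((eH n j).rev) = eH n j := Equiv.swap_apply_right _ _
      rw [h1, h2, inv_zpow, ← zpow_neg, neg_sub]
    · rw [Function.update_of_ne hj]
      have h1 : g (eH n j) = eH n j :=
        Equiv.swap_apply_of_ne_of_ne (fun h => hj (eH_inj h)) (eH_ne_rev j j₀)
      have h2 : g ((eH n j).rev) = (eH n j).rev :=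
        Equiv.swap_apply_of_ne_of_ne (fun h => (eH_ne_rev j₀ j) h.symm)
          (fun h => hj (rev_eH_inj h))
      rw [h1, h2]
  · -- permutation invariance
    have hswap : ∀ a b : Fin n, a ≠ b → ∀ z : Fin n → ℂ,
        macdonaldCnRow (q : ℂ) (t : ℂ) n lam (z ∘ Equiv.swap a b) =
          macdonaldCnRow (q : ℂ) (t : ℂ) n lam z := by
      intro a b hab z
      set τ : Equiv.Perm (Fin n) := Equiv.swap a b with hτ
      set g : Equiv.Perm (Fin (2 * n)) :=
        (Equiv.swap (eH n a) (eH n b)).trans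
          (Equiv.swap (eH n a).rev (eH n b).rev) with hg
      have hge : ∀ j : Fin n, g (eH n j) = eH n (τ j) := by
        intro j
        have hfix : ∀ k : Fin n, Equiv.swap (eH n a).rev (eH n b).rev (eH n k) = eH n k :=
          fun k => Equiv.swap_apply_of_ne_of_ne (eH_ne_rev k a) (eH_ne_rev k b)
        show Equiv.swap (eH n a).rev (eH n b).rev (Equiv.swap (eH n a) (eH n b) (eH n j)) = _
        by_cases hja : j = a
        · subst hja
          rw [Equiv.swap_apply_left, hfix, hτ, Equiv.swap_apply_left]
        by_cases hjb : j = b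
        · subst hjb
          rw [Equiv.swap_apply_right, hfix, hτ, Equiv.swap_apply_right]
        rw [Equiv.swap_apply_of_ne_of_ne (fun h => hja (eH_inj h))
          (fun h => hjb (eH_inj h)), hfix, hτ,
          Equiv.swap_apply_of_ne_of_ne hja hjb]
      have hgr : ∀ j : Fin n, g ((eH n j).rev) = (eH n (τ j)).rev := by
        intro j
        have hfix : ∀ k : Fin n,
            Equiv.swap (eH n a) (eH n b) ((eH n k).rev) = (eH n k).rev :=
          fun k => Equiv.swap_apply_of_ne_of_ne
            (fun h => eH_ne_rev a k h.symm) (fun h => eH_ne_rev b k h.symm)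
        show Equiv.swap (eH n a).rev (eH n b).rev
          (Equiv.swap (eH n a) (eH n b) ((eH n j).rev)) = _
        rw [hfix]
        by_cases hja : j = a
        · subst hja; rw [Equiv.swap_apply_left, hτ, Equiv.swap_apply_left]
        by_cases hjb : j = b
        · subst hjb; rw [Equiv.swap_apply_right, hτ, Equiv.swap_apply_right]
        rw [Equiv.swap_apply_of_ne_of_ne (fun h => hja (rev_eH_inj h))
          (fun h => hjb (rev_eH_inj h)), hτ,
          Equiv.swap_apply_of_ne_of_ne hja hjb]
      rw [mac_eq, mac_eq, sum_comp_perm g]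
      congr 1
      apply Finset.sum_congr rfl
      intro i _
      rw [coeff_comp]
      congr 1
      unfold mono
      simp only [Function.comp_apply]
      calc ∏ j : Fin n, z (τ j) ^ ((i (g (eH n j)) : ℤ) - (i (g ((eH n j).rev)) : ℤ))
          = ∏ j : Fin n,
              (fun j' => (z j') ^ ((i (eH n j') : ℤ) - (i ((eH n j').rev) : ℤ))) (τ j) := by
            apply Finset.prod_congr rfl
            intro j _
            simp only
            rw [hge, hgr]
        _ = ∏ j : Fin n, (z j) ^ ((i (eH n j) : ℤ) - (i ((eH n j).rev) : ℤ)) := by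
            exact Equiv.prod_comp τ
              (fun j' => (z j') ^ ((i (eH n j') : ℤ) - (i ((eH n j').rev) : ℤ)))
    intro σ
    have hperm : ∀ σ : Equiv.Perm (Fin n), ∀ z : Fin n → ℂ,
        macdonaldCnRow (q : ℂ) (t : ℂ) n lam (z ∘ σ) =
          macdonaldCnRow (q : ℂ) (t : ℂ) n lam z := by
      intro σ
      refine Equiv.Perm.swap_induction_on σ ?_ ?_
      · intro z; simp
      · intro f x x' hxx' ih z
        have hc : z ∘ ⇑(Equiv.swap x x' * f) = (z ∘ Equiv.swap x x') ∘ f := rfl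
        rw [hc, ih, hswap x x' hxx']
    exact hperm σ y
end

section
/- Let t ∈ ℂ, and for a variable z ≠ 1 define the operator T on functions f(z) (f a rational function of z, with s denoting the substitution z ↦ z⁻¹) by (Tf)(z) = t·f(z) + [(1 - t·z)/(1 - z)]·(f(z⁻¹) - f(z)). Then (T - t)(T + 1) = 0 as operators, i.e. T²f = (t - 1)·Tf + t·f for all rational functions f. -/
/-- The Hecke (quadratic) relation `(T - t)(T + 1) = 0` for the rank-one
Lusztig operator `T f = t·f + ((1 - t·z)/(1 - z))·(σ f - f)`, where `σ` is the
field involution with `σ z = z⁻¹` (the substitution `z ↦ z⁻¹` on the field of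
rational functions) fixing the scalar `t`. -/
theorem stmt_13 {K : Type*} [Field K] (σ : K →+* K)
    (hσ : ∀ a : K, σ (σ a) = a) (t z : K) (ht : σ t = t)
    (hz0 : z ≠ 0) (hz1 : z ≠ 1) (hσz : σ z = z⁻¹)
    (T : K → K)
    (hT : ∀ f : K, T f = t * f + ((1 - t * z) / (1 - z)) * (σ f - f)) :
    ∀ f : K, T (T f) = (t - 1) * T f + t * f := by
  intro f
  have hz1' : (1 : K) - z ≠ 0 := sub_ne_zero.mpr (Ne.symm hz1)
  have hz1'' : z - 1 ≠ 0 := sub_ne_zero.mpr hz1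
  have hcoe : (1 - t * z⁻¹) / (1 - z⁻¹) = (z - t) / (z - 1) := by
    field_simp
  have hσTf : σ (T f) = t * σ f + ((z - t) / (z - 1)) * (f - σ f) := by
    rw [hT f]
    simp [map_add, map_mul, map_sub, map_div₀, map_one, ht, hσz, hσ, hcoe]
  rw [hT (T f), hσTf, hT f]
  field_simp
  ring
end

section
/- Let t ∈ ℂ and consider the field ℂ(y₁, y₂) of rational functions with the symmetric group action s swapping y₁ and y₂. Define the Lusztig operator T f = t·f + [(1 - t·y₁/y₂)/(1 - y₁/y₂)]·(s(f) - f). Then for the functions φ₁ = 1/(1 - t·y₁⁻¹/x) and φ₂ = (1 - y₁⁻¹/x)/((1 - t·y₂⁻¹/x)(1 - t·y₁⁻¹/x)) (regarded as elements of ℂ(x, y₁, y₂) with s acting only on y₁, y₂): T φ₁ = t·φ₂ and T φ₂ = (t - 1)·φ₂ + φ₁. -/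
/-!
In the variables `a = y₁⁻¹/x` and `b = y₂⁻¹/x`, which `s` swaps, the coefficient of the
Lusztig operator is `(a - t b)/(a - b)` and both `φ`'s are rational in `a`, `b`, `t` with
denominators `1 - t a`, `1 - t b`. For each `φ`, `s φ - φ` is divisible by `a - b`, so the
coefficient's denominator cancels and both identities reduce to polynomial identities.
-/

section LusztigIdentities

variable {K : Type*} [Field K] {a b t : K}

lemma one_sub_mul_div_div_one_sub_div (ha : a ≠ 0) :
    (1 - t * (b / a)) / (1 - b / a) = (a - t * b) / (a - b) := by
  rw [← div_div_div_cancel_right₀ ha (a - t * b), sub_div a, sub_div a, div_self ha,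
    mul_div_assoc]

lemma lusztig_phi₁ (hab : a ≠ b) (ha : 1 - t * a ≠ 0) (hb : 1 - t * b ≠ 0) :
    t * (1 / (1 - t * a)) + (a - t * b) / (a - b) * (1 / (1 - t * b) - 1 / (1 - t * a)) =
      t * ((1 - a) / ((1 - t * b) * (1 - t * a))) := by
  have hab' : a - b ≠ 0 := sub_ne_zero.2 hab
  field_simp
  ring

lemma lusztig_phi₂ (hab : a ≠ b) (ha : 1 - t * a ≠ 0) (hb : 1 - t * b ≠ 0) :
    t * ((1 - a) / ((1 - t * b) * (1 - t * a))) + (a - t * b) / (a - b) *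
        ((1 - b) / ((1 - t * a) * (1 - t * b)) - (1 - a) / ((1 - t * b) * (1 - t * a))) =
      (t - 1) * ((1 - a) / ((1 - t * b) * (1 - t * a))) + 1 / (1 - t * a) := by
  have hab' : a - b ≠ 0 := sub_ne_zero.2 hab
  field_simp
  ring

end LusztigIdentities

theorem stmt_14_general {K : Type*} [Field K] (s : K →+* K)
    (t x y₁ y₂ : K)
    (hst : s t = t) (hsx : s x = x) (hs1 : s y₁ = y₂) (hs2 : s y₂ = y₁)
    (hx : x ≠ 0) (hy₁ : y₁ ≠ 0) (hne : y₁ / y₂ ≠ 1)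
    (h1 : 1 - t * y₁⁻¹ / x ≠ 0) (h2 : 1 - t * y₂⁻¹ / x ≠ 0)
    (T : K → K)
    (hT : ∀ f : K,
      T f = t * f + ((1 - t * (y₁ / y₂)) / (1 - y₁ / y₂)) * (s f - f)) :
    T (1 / (1 - t * y₁⁻¹ / x)) =
        t * ((1 - y₁⁻¹ / x) / ((1 - t * y₂⁻¹ / x) * (1 - t * y₁⁻¹ / x))) ∧
    T ((1 - y₁⁻¹ / x) / ((1 - t * y₂⁻¹ / x) * (1 - t * y₁⁻¹ / x))) =
        (t - 1) * ((1 - y₁⁻¹ / x) / ((1 - t * y₂⁻¹ / x) * (1 - t * y₁⁻¹ / x)))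
          + 1 / (1 - t * y₁⁻¹ / x) := by
  simp only [mul_div_assoc] at h1 h2 ⊢
  set a := y₁⁻¹ / x
  set b := y₂⁻¹ / x
  have ha : a ≠ 0 := div_ne_zero (inv_ne_zero hy₁) hx
  have hratio : y₁ / y₂ = b / a := by
    rw [div_div_div_cancel_right₀ hx, inv_div_inv]
  have hab : a ≠ b := fun h => hne (hratio ▸ (div_eq_one_iff_eq ha).2 h.symm)
  have hsa : s a = b := by simp only [a, b, map_div₀, map_inv₀, hs1, hsx]
  have hsb : s b = a := by simp only [a, b, map_div₀, map_inv₀, hs2, hsx]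
  simp only [hT, hratio, one_sub_mul_div_div_one_sub_div ha, map_div₀, map_sub, map_mul,
    map_one, hst, hsa, hsb]
  exact ⟨lusztig_phi₁ hab h1 h2, lusztig_phi₂ hab h1 h2⟩

/-- Proposition 6.1 in the simplest instance: the Lusztig operator
`T f = t·f + ((1 - t·y₁/y₂)/(1 - y₁/y₂))·(s(f) - f)`, where `s` swaps `y₁`
and `y₂` (fixing `x` and `t`), satisfies `T φ₁ = t·φ₂` and
`T φ₂ = (t-1)·φ₂ + φ₁` for
`φ₁ = 1/(1 - t·y₁⁻¹/x)` and
`φ₂ = (1 - y₁⁻¹/x)/((1 - t·y₂⁻¹/x)(1 - t·y₁⁻¹/x))`. -/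
theorem stmt_14 {K : Type*} [Field K] (s : K →+* K)
    (t x y₁ y₂ : K)
    (hst : s t = t) (hsx : s x = x) (hs1 : s y₁ = y₂) (hs2 : s y₂ = y₁)
    (hx : x ≠ 0) (hy₁ : y₁ ≠ 0) (hy₂ : y₂ ≠ 0) (hne : y₁ / y₂ ≠ 1)
    (h1 : 1 - t * y₁⁻¹ / x ≠ 0) (h2 : 1 - t * y₂⁻¹ / x ≠ 0)
    (T : K → K)
    (hT : ∀ f : K,
      T f = t * f + ((1 - t * (y₁ / y₂)) / (1 - y₁ / y₂)) * (s f - f)) :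
    T (1 / (1 - t * y₁⁻¹ / x)) =
        t * ((1 - y₁⁻¹ / x) / ((1 - t * y₂⁻¹ / x) * (1 - t * y₁⁻¹ / x))) ∧
    T ((1 - y₁⁻¹ / x) / ((1 - t * y₂⁻¹ / x) * (1 - t * y₁⁻¹ / x))) =
        (t - 1) * ((1 - y₁⁻¹ / x) / ((1 - t * y₂⁻¹ / x) * (1 - t * y₁⁻¹ / x)))
          + 1 / (1 - t * y₁⁻¹ / x) :=
  stmt_14_general s t x y₁ y₂ hst hsx hs1 hs2 hx hy₁ hne h1 h2 T hT
end
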